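/- arXiv:1309.5003 — 2 statements merged into one kernel-verified Lean document; each statement's English description precedes it below -/
import Mathlib

section
/- Let p be a probability density on ℝ^d belonging to the Hölder class H₂^(α)(K), i.e., the L₂-norm of p(·−h) − p(·) is at most K|h|^α for all |h| ≤ 1. For independent random vectors X, Y with densities p_X, p_Y ∈ H₂^(α)(K) ∩ L₂(ℝ^d), the quantity q̃_{1,1,ε} := b_ε(d)^{-1} P(|X−Y| ≤ ε) satisfies |q̃_{1,1,ε} − ∫ p_X p_Y| ≤ (1/2) K² ε^{2α} for all 0 < ε ≤ 1. -/
/-!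
Let `A h = ∫ p_X(x) p_Y(x - h) dx`, the density of `X - Y`. Then `P(|X - Y| ≤ ε)` is the integral
of `A` over the closed `ε`-ball, and since the ball is symmetric, `b_ε(d)⁻¹ P(|X - Y| ≤ ε)` is the
ball average of `(A h + A (-h)) / 2`. Expanding the product shows
`A h + A (-h) - 2 q₁₁ = -∫ Δ_h p_X Δ_h p_Y` with `Δ_h p = p(· - h) - p`, so by Cauchy–Schwarz and
the Hölder condition the symmetrized `A` is within `½ K² |h|^(2α) ≤ ½ K² ε^(2α)` of `q₁₁` on the
ball, and so is its average.
-/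

open MeasureTheory ProbabilityTheory
open scoped ENNReal

namespace MeasureTheory

section Real

variable {α : Type*} [MeasurableSpace α] {μ : Measure α} {s : Set α}

theorem abs_integral_mul_le_sqrt_mul_sqrt {f g : α → ℝ} (hf : MemLp f 2 μ) (hg : MemLp g 2 μ) :
    |∫ x, f x * g x ∂μ| ≤ √(∫ x, f x ^ 2 ∂μ) * √(∫ x, g x ^ 2 ∂μ) := by
  have hHolder := integral_mul_norm_le_Lp_mul_Lq (f := f) (g := g) Real.HolderConjugate.two_two
    (by rwa [ENNReal.ofReal_ofNat]) (by rwa [ENNReal.ofReal_ofNat])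
  simp only [Real.norm_eq_abs, Real.rpow_two, sq_abs, ← Real.sqrt_eq_rpow] at hHolder
  calc |∫ x, f x * g x ∂μ| ≤ ∫ x, |f x * g x| ∂μ := abs_integral_le_integral_abs
    _ = ∫ x, |f x| * |g x| ∂μ := by simp only [abs_mul]
    _ ≤ _ := hHolder

theorem abs_setAverage_sub_le {f : α → ℝ} {c C : ℝ} (hs0 : μ s ≠ 0) (hs : μ s ≠ ∞)
    (hf : IntegrableOn f s μ) (hbound : ∀ x ∈ s, |f x - c| ≤ C) :
    |⨍ x in s, f x ∂μ - c| ≤ C := by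
  have hμs : 0 < μ.real s := ENNReal.toReal_pos hs0 hs
  have hshift : ⨍ x in s, f x ∂μ - c = (μ.real s)⁻¹ * ∫ x in s, (f x - c) ∂μ := by
    rw [setAverage_eq, integral_sub hf (integrableOn_const hs), setIntegral_const, smul_eq_mul,
      smul_eq_mul]
    field_simp
  rw [hshift, abs_mul, abs_inv, abs_of_pos hμs, inv_mul_le_iff₀ hμs, mul_comm]
  exact norm_setIntegral_le_of_norm_le_const (f := fun x => f x - c) hs.lt_top hbound

theorem integrable_of_isFiniteMeasure_withDensity_ofReal {F : α → ℝ}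
    (hF : AEStronglyMeasurable F μ) (hF0 : 0 ≤ᵐ[μ] F)
    [IsFiniteMeasure (μ.withDensity fun x => ENNReal.ofReal (F x))] : Integrable F μ := by
  refine ⟨hF, (hasFiniteIntegral_iff_ofReal hF0).2 ?_⟩
  simpa using measure_lt_top (μ.withDensity fun x => ENNReal.ofReal (F x)) Set.univ

theorem measureReal_withDensity_ofReal {F : α → ℝ} (hF : AEStronglyMeasurable F μ)
    (hF0 : 0 ≤ᵐ[μ] F) (hs : MeasurableSet s) :
    (μ.withDensity fun x => ENNReal.ofReal (F x)).real s = ∫ x in s, F x ∂μ := by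
  rw [measureReal_def, withDensity_apply _ hs,
    integral_eq_lintegral_of_nonneg_ae (ae_restrict_of_ae hF0) hF.restrict]

end Real

section Neg

variable {G : Type*} [AddCommGroup G] [MeasurableSpace G] [MeasurableNeg G] {μ : Measure G}
  [μ.IsNegInvariant] {s : Set G}

theorem map_neg_withDensity [SFinite μ] {g : G → ℝ≥0∞} (hg : AEMeasurable g μ) :
    (μ.withDensity g).map Neg.neg = μ.withDensity (fun x => g (-x)) := by
  have hg_neg : AEMeasurable (fun x => g (-x)) μ :=
    hg.comp_quasiMeasurePreserving (Measure.measurePreserving_neg μ).quasiMeasurePreserving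
  refine Measure.ext_of_lintegral _ fun φ hφ => ?_
  rw [lintegral_map hφ measurable_neg, lintegral_withDensity_eq_lintegral_mul₀ hg (by fun_prop),
    lintegral_withDensity_eq_lintegral_mul₀ hg_neg hφ.aemeasurable, ← lintegral_neg_eq_self]
  simp only [Pi.mul_apply, neg_neg, mul_comm]

theorem setIntegral_comp_neg_of_neg_eq (hs : -s = s) (f : G → ℝ) :
    ∫ x in s, f (-x) ∂μ = ∫ x in s, f x ∂μ := by
  simpa [hs] using (Measure.measurePreserving_neg μ).setIntegral_preimage_emb
    (MeasurableEquiv.neg G).measurableEmbedding f s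

theorem setAverage_eq_setAverage_add_neg (hs : -s = s) {f : G → ℝ} (hf : IntegrableOn f s μ) :
    ⨍ x in s, f x ∂μ = ⨍ x in s, (f x + f (-x)) / 2 ∂μ := by
  have hf_neg : IntegrableOn (fun x => f (-x)) s μ := hs ▸ hf.comp_neg
  rw [setAverage_eq, setAverage_eq, integral_div, integral_add hf hf_neg,
    setIntegral_comp_neg_of_neg_eq hs]
  simp only [smul_eq_mul]
  ring

end Neg

section CrossCorr

variable {G : Type*} [AddCommGroup G] [MeasurableSpace G]

noncomputable def crossCorr (μ : Measure G) (f g : G → ℝ) (h : G) : ℝ :=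
  ∫ x, f x * g (x - h) ∂μ

theorem crossCorr_nonneg {μ : Measure G} {f g : G → ℝ} (hf : ∀ x, 0 ≤ f x) (hg : ∀ x, 0 ≤ g x)
    (h : G) : 0 ≤ crossCorr μ f g h :=
  integral_nonneg fun x => mul_nonneg (hf x) (hg (x - h))

variable [MeasurableAdd₂ G] {μ : Measure G} [μ.IsAddLeftInvariant]

theorem MemLp.comp_sub_right {f : G → ℝ} {p : ℝ≥0∞} (hf : MemLp f p μ) (h : G) :
    MemLp (fun x => f (x - h)) p μ :=
  hf.comp_measurePreserving (measurePreserving_sub_right μ h)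

theorem crossCorr_add_crossCorr_neg {f g : G → ℝ} (hf : MemLp f 2 μ) (hg : MemLp g 2 μ) (h : G) :
    crossCorr μ f g h + crossCorr μ f g (-h)
      = 2 * ∫ x, f x * g x ∂μ - ∫ x, (f (x - h) - f x) * (g (x - h) - g x) ∂μ := by
  have hfh := hf.comp_sub_right h
  have hgh := hg.comp_sub_right h
  have i1 : Integrable (fun x => f (x - h) * g (x - h)) μ := hfh.integrable_mul hgh
  have i2 : Integrable (fun x => f (x - h) * g x) μ := hfh.integrable_mul hg
  have i3 : Integrable (fun x => f x * g (x - h)) μ := hf.integrable_mul hgh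
  have i4 : Integrable (fun x => f x * g x) μ := hf.integrable_mul hg
  have hshift : ∫ x, f (x - h) * g (x - h) ∂μ = ∫ x, f x * g x ∂μ :=
    integral_sub_right_eq_self (fun x => f x * g x) h
  have hneg : crossCorr μ f g (-h) = ∫ x, f (x - h) * g x ∂μ := by
    simpa [crossCorr] using (integral_sub_right_eq_self (fun x => f x * g (x + h)) h (μ := μ)).symm
  have hexpand : ∫ x, (f (x - h) - f x) * (g (x - h) - g x) ∂μ
      = ∫ x, f (x - h) * g (x - h) ∂μ - ∫ x, f (x - h) * g x ∂μ
        - ∫ x, f x * g (x - h) ∂μ + ∫ x, f x * g x ∂μ := by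
    have hring : (fun x => (f (x - h) - f x) * (g (x - h) - g x)) = fun x =>
        f (x - h) * g (x - h) - f (x - h) * g x - f x * g (x - h) + f x * g x := by
      ext x; ring
    rw [hring, integral_add (by exact (i1.sub i2).sub i3) i4, integral_sub (by exact i1.sub i2) i3,
      integral_sub i1 i2]
  rw [hexpand, hshift, hneg, crossCorr]
  ring

theorem abs_crossCorr_add_crossCorr_neg_sub_le {f g : G → ℝ} (hf : MemLp f 2 μ) (hg : MemLp g 2 μ)
    (h : G) :
    |crossCorr μ f g h + crossCorr μ f g (-h) - 2 * ∫ x, f x * g x ∂μ|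
      ≤ √(∫ x, (f (x - h) - f x) ^ 2 ∂μ) * √(∫ x, (g (x - h) - g x) ^ 2 ∂μ) := by
  rw [crossCorr_add_crossCorr_neg hf hg h, sub_sub_cancel_left, abs_neg]
  exact abs_integral_mul_le_sqrt_mul_sqrt ((hf.comp_sub_right h).sub hf)
    ((hg.comp_sub_right h).sub hg)

theorem lconvolution_ofReal_neg {f g : G → ℝ} (hf0 : ∀ x, 0 ≤ f x) (hg0 : ∀ x, 0 ≤ g x)
    (hf : MemLp f 2 μ) (hg : MemLp g 2 μ) :
    (fun x => ENNReal.ofReal (f x)) ⋆ₗ[μ] (fun x => ENNReal.ofReal (g (-x)))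
      = fun h => ENNReal.ofReal (crossCorr μ f g h) := by
  ext h
  rw [lconvolution_def, crossCorr, ofReal_integral_eq_lintegral_ofReal
    (by exact hf.integrable_mul (hg.comp_sub_right h))
    (ae_of_all _ fun x => mul_nonneg (hf0 x) (hg0 (x - h)))]
  refine lintegral_congr fun x => ?_
  rw [neg_add_rev, neg_neg, neg_add_eq_sub, ENNReal.ofReal_mul (hf0 x)]

theorem aestronglyMeasurable_crossCorr [MeasurableNeg G] [SFinite μ] {f g : G → ℝ}
    (hf : AEStronglyMeasurable f μ) (hg : AEStronglyMeasurable g μ) :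
    AEStronglyMeasurable (crossCorr μ f g) μ :=
  AEStronglyMeasurable.integral_prod_right' (f := fun p : G × G => f p.2 * g (p.2 - p.1)) <|
    hf.comp_snd.mul <| hg.comp_quasiMeasurePreserving <|
      (quasiMeasurePreserving_sub_of_right_invariant μ μ).comp
        Measure.measurePreserving_swap.quasiMeasurePreserving

end CrossCorr

theorem abs_crossCorr_symm_sub_le_of_holder {G : Type*} [NormedAddCommGroup G] [MeasurableSpace G]
    [MeasurableAdd₂ G] {μ : Measure G} [μ.IsAddLeftInvariant] {f g : G → ℝ} (hf : MemLp f 2 μ)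
    (hg : MemLp g 2 μ) {α K ε : ℝ} (hα : 0 ≤ α) (hε1 : ε ≤ 1)
    (hHf : ∀ h : G, ‖h‖ ≤ 1 → √(∫ x, (f (x - h) - f x) ^ 2 ∂μ) ≤ K * ‖h‖ ^ α)
    (hHg : ∀ h : G, ‖h‖ ≤ 1 → √(∫ x, (g (x - h) - g x) ^ 2 ∂μ) ≤ K * ‖h‖ ^ α)
    {h : G} (hh : ‖h‖ ≤ ε) :
    |(crossCorr μ f g h + crossCorr μ f g (-h)) / 2 - ∫ x, f x * g x ∂μ|
      ≤ 1 / 2 * K ^ 2 * ε ^ (2 * α) := by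
  have hΔf := hHf h (hh.trans hε1)
  have hΔg := hHg h (hh.trans hε1)
  calc |(crossCorr μ f g h + crossCorr μ f g (-h)) / 2 - ∫ x, f x * g x ∂μ|
      = |crossCorr μ f g h + crossCorr μ f g (-h) - 2 * ∫ x, f x * g x ∂μ| / 2 := by
        rw [← abs_of_pos (two_pos : (0 : ℝ) < 2), ← abs_div, abs_two]; ring_nf
    _ ≤ √(∫ x, (f (x - h) - f x) ^ 2 ∂μ) * √(∫ x, (g (x - h) - g x) ^ 2 ∂μ) / 2 := by
        gcongr; exact abs_crossCorr_add_crossCorr_neg_sub_le hf hg h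
    _ ≤ (K * ‖h‖ ^ α) * (K * ‖h‖ ^ α) / 2 := by
        gcongr
        exact (Real.sqrt_nonneg _).trans hΔf
    _ = 1 / 2 * K ^ 2 * (‖h‖ ^ α) ^ 2 := by ring
    _ ≤ 1 / 2 * K ^ 2 * ε ^ (2 * α) := by
        rw [mul_comm 2 α, Real.rpow_mul ((norm_nonneg h).trans hh), Real.rpow_two]
        gcongr

theorem measureReal_closedBall_eq_ball {E : Type*} [NormedAddCommGroup E] [NormedSpace ℝ E]
    [MeasurableSpace E] [BorelSpace E] [FiniteDimensional ℝ E] (μ : Measure E) [μ.IsAddHaarMeasure]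
    (x : E) {r : ℝ} (hr : 0 < r) : μ.real (Metric.closedBall x r) = μ.real (Metric.ball x r) := by
  rcases subsingleton_or_nontrivial E with hE | hE
  · congr 1
    ext y
    simp [Subsingleton.elim y x, hr, hr.le]
  · exact Measure.addHaar_real_closedBall_eq_addHaar_real_ball μ x r

end MeasureTheory

namespace ProbabilityTheory

theorem IndepFun.map_sub_eq_withDensity_crossCorr {Ω G : Type*} [MeasurableSpace Ω]
    {P : Measure Ω} [IsFiniteMeasure P] [AddCommGroup G] [MeasurableSpace G] [MeasurableAdd₂ G]
    [MeasurableNeg G] {μ : Measure G} [SFinite μ] [μ.IsAddLeftInvariant] [μ.IsNegInvariant]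
    {X Y : Ω → G} (hX : AEMeasurable X P) (hY : AEMeasurable Y P) (hXY : IndepFun X Y P)
    {f g : G → ℝ} (hf0 : ∀ x, 0 ≤ f x) (hg0 : ∀ x, 0 ≤ g x) (hf : MemLp f 2 μ) (hg : MemLp g 2 μ)
    (hlawX : P.map X = μ.withDensity (fun x => ENNReal.ofReal (f x)))
    (hlawY : P.map Y = μ.withDensity (fun x => ENNReal.ofReal (g x))) :
    P.map (X - Y) = μ.withDensity (fun h => ENNReal.ofReal (crossCorr μ f g h)) := by
  have hg_meas : AEMeasurable (fun x => ENNReal.ofReal (g x)) μ := hg.1.aemeasurable.ennreal_ofReal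
  have hg_neg : AEMeasurable (fun x => ENNReal.ofReal (g (-x))) μ :=
    hg_meas.comp_quasiMeasurePreserving (Measure.measurePreserving_neg μ).quasiMeasurePreserving
  have hlaw_negY : P.map (-Y) = μ.withDensity (fun x => ENNReal.ofReal (g (-x))) := by
    rw [← map_neg_withDensity hg_meas, ← hlawY,
      AEMeasurable.map_map_of_aemeasurable measurable_neg.aemeasurable hY]
    rfl
  rw [sub_eq_add_neg, (hXY.comp measurable_id measurable_neg).map_add_eq_map_conv_map₀ hX hY.neg,
    hlawX, hlaw_negY, conv_withDensity_eq_mlconvolution₀ hf.1.aemeasurable.ennreal_ofReal hg_neg,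
    lconvolution_ofReal_neg hf0 hg0 hf hg]

end ProbabilityTheory

theorem bias_bound_q11_general (d : ℕ) (α K : ℝ) (hα : 0 < α)
    {Ω : Type*} [MeasureSpace Ω] [IsProbabilityMeasure (ℙ : Measure Ω)]
    (X Y : Ω → EuclideanSpace ℝ (Fin d)) (hX : Measurable X) (hY : Measurable Y)
    (hindep : IndepFun X Y ℙ)
    (pX pY : EuclideanSpace ℝ (Fin d) → ℝ)
    (hpX0 : ∀ x, 0 ≤ pX x) (hpY0 : ∀ x, 0 ≤ pY x)
    (hpX2 : MeasureTheory.MemLp pX 2 volume) (hpY2 : MeasureTheory.MemLp pY 2 volume)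
    (hlawX : Measure.map X ℙ = volume.withDensity (fun x => ENNReal.ofReal (pX x)))
    (hlawY : Measure.map Y ℙ = volume.withDensity (fun x => ENNReal.ofReal (pY x)))
    (hHolderX : ∀ h : EuclideanSpace ℝ (Fin d), ‖h‖ ≤ 1 →
      Real.sqrt (∫ x, (pX (x - h) - pX x) ^ 2) ≤ K * ‖h‖ ^ α)
    (hHolderY : ∀ h : EuclideanSpace ℝ (Fin d), ‖h‖ ≤ 1 →
      Real.sqrt (∫ x, (pY (x - h) - pY x) ^ 2) ≤ K * ‖h‖ ^ α)
    (ε : ℝ) (hε : 0 < ε) (hε1 : ε ≤ 1) :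
    |((volume (Metric.ball (0 : EuclideanSpace ℝ (Fin d)) ε)).toReal)⁻¹
        * (ℙ {ω | dist (X ω) (Y ω) ≤ ε}).toReal
      - ∫ x, pX x * pY x| ≤ (1 / 2) * K ^ 2 * ε ^ (2 * α) := by
  set A := crossCorr volume pX pY
  set B := Metric.closedBall (0 : EuclideanSpace ℝ (Fin d)) ε
  have hlaw : Measure.map (X - Y) ℙ = volume.withDensity (fun h => ENNReal.ofReal (A h)) :=
    hindep.map_sub_eq_withDensity_crossCorr hX.aemeasurable hY.aemeasurable hpX0 hpY0 hpX2 hpY2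
      hlawX hlawY
  have hA_meas : AEStronglyMeasurable A volume := aestronglyMeasurable_crossCorr hpX2.1 hpY2.1
  have hA0 : 0 ≤ᵐ[volume] A := ae_of_all _ (crossCorr_nonneg hpX0 hpY0)
  have hA_int : Integrable A volume :=
    have : IsFiniteMeasure (volume.withDensity fun h => ENNReal.ofReal (A h)) := hlaw ▸ inferInstance
    integrable_of_isFiniteMeasure_withDensity_ofReal hA_meas hA0
  have hP : (ℙ {ω | dist (X ω) (Y ω) ≤ ε}).toReal = ∫ h in B, A h := by
    have hevent : {ω | dist (X ω) (Y ω) ≤ ε} = (X - Y) ⁻¹' B := by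
      ext ω; simp [B, dist_eq_norm]
    rw [← measureReal_withDensity_ofReal hA_meas hA0 measurableSet_closedBall, ← hlaw,
      measureReal_def, Measure.map_apply (hX.sub hY) measurableSet_closedBall, hevent]
  have hB_neg : -B = B := by ext; simp [B]
  rw [← measureReal_def, ← measureReal_closedBall_eq_ball volume 0 hε, hP, ← smul_eq_mul,
    ← setAverage_eq, setAverage_eq_setAverage_add_neg hB_neg hA_int.integrableOn]
  refine abs_setAverage_sub_le (Metric.measure_closedBall_pos volume 0 hε).ne'
    measure_closedBall_lt_top.ne ((hA_int.add hA_int.comp_neg).div_const 2).integrableOn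
    fun h hh => ?_
  exact abs_crossCorr_symm_sub_le_of_holder hpX2 hpY2 hα.le hε1 hHolderX hHolderY
    (by simpa [B] using hh)

/-- For independent `X ~ p_X`, `Y ~ p_Y` with densities in the Hölder class `H₂^(α)(K)`,
the approximation `q̃_{1,1,ε} = b_ε(d)⁻¹ P(|X - Y| ≤ ε)` of `q_{1,1} = ∫ p_X p_Y`
satisfies `|q̃_{1,1,ε} - q_{1,1}| ≤ (1/2) K² ε^(2α)` for `0 < ε ≤ 1`. -/
theorem bias_bound_q11 (d : ℕ) (hd : 1 ≤ d) (α K : ℝ) (hα : 0 < α) (hα1 : α ≤ 1) (hK : 0 < K)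
    {Ω : Type*} [MeasureSpace Ω] [IsProbabilityMeasure (ℙ : Measure Ω)]
    (X Y : Ω → EuclideanSpace ℝ (Fin d)) (hX : Measurable X) (hY : Measurable Y)
    (hindep : IndepFun X Y ℙ)
    (pX pY : EuclideanSpace ℝ (Fin d) → ℝ)
    (hpX0 : ∀ x, 0 ≤ pX x) (hpY0 : ∀ x, 0 ≤ pY x)
    (hpX2 : MeasureTheory.MemLp pX 2 volume) (hpY2 : MeasureTheory.MemLp pY 2 volume)
    (hlawX : Measure.map X ℙ = volume.withDensity (fun x => ENNReal.ofReal (pX x)))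
    (hlawY : Measure.map Y ℙ = volume.withDensity (fun x => ENNReal.ofReal (pY x)))
    (hHolderX : ∀ h : EuclideanSpace ℝ (Fin d), ‖h‖ ≤ 1 →
      Real.sqrt (∫ x, (pX (x - h) - pX x) ^ 2) ≤ K * ‖h‖ ^ α)
    (hHolderY : ∀ h : EuclideanSpace ℝ (Fin d), ‖h‖ ≤ 1 →
      Real.sqrt (∫ x, (pY (x - h) - pY x) ^ 2) ≤ K * ‖h‖ ^ α)
    (ε : ℝ) (hε : 0 < ε) (hε1 : ε ≤ 1) :
    |((volume (Metric.ball (0 : EuclideanSpace ℝ (Fin d)) ε)).toReal)⁻¹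
        * (ℙ {ω | dist (X ω) (Y ω) ≤ ε}).toReal
      - ∫ x, pX x * pY x| ≤ (1 / 2) * K ^ 2 * ε ^ (2 * α) :=
  bias_bound_q11_general d α K hα X Y hX hY hindep pX pY hpX0 hpY0 hpX2 hpY2 hlawX hlawY hHolderX
    hHolderY ε hε hε1
end

section
/- For a random vector X in ℝ^d with density p_X ∈ H₂^(α)(K), the kernel-smoothed approximation q̃_{2,0,ε} := b_ε(d)^{-1} P(|X − X'| ≤ ε), where X' is an independent copy of X, satisfies |q̃_{2,0,ε} − ∫ p_X(x)² dx| ≤ (1/2) K² ε^{2α} for 0 < ε ≤ 1. -/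
/-!
With the autocorrelation `J h = ∫ p x * p (x + h)`, the shear `(x, y) ↦ (x, y - x)` turns
`P(|X - X'| ≤ ε)` into `∫_{B_ε} J`, so `q̃_{2,0,ε}` is the average of `J` over the ball.
Expanding the square gives `∫ p² - J h = ½ ∫ (p (x + h) - p x)²`, which the Hölder condition
puts in `[0, ½ K² ε^(2α)]` for `‖h‖ ≤ ε`; averaging preserves this bound.
-/

open MeasureTheory ProbabilityTheory

open Metric Set
open scoped ENNReal

noncomputable def autocorr {G : Type*} [Add G] [MeasurableSpace G] (μ : Measure G) (p : G → ℝ)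
    (h : G) : ℝ :=
  ∫ x, p x * p (x + h) ∂μ

section Translation

variable {G : Type*} [AddGroup G] [MeasurableSpace G] [MeasurableAdd G] {μ : Measure G}
  [μ.IsAddRightInvariant] {p : G → ℝ}

lemma MeasureTheory.MemLp.comp_add_right {q : ℝ≥0∞} (hp : MemLp p q μ) (h : G) :
    MemLp (fun x => p (x + h)) q μ :=
  hp.comp_measurePreserving (measurePreserving_add_right μ h)

lemma MeasureTheory.MemLp.integrable_mul_comp_add_right (hp : MemLp p 2 μ) (h : G) :
    Integrable (fun x => p x * p (x + h)) μ :=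
  hp.integrable_mul (hp.comp_add_right h)

lemma integral_sq_sub_autocorr (hp : MemLp p 2 μ) (h : G) :
    ∫ x, p x ^ 2 ∂μ - autocorr μ p h = (∫ x, (p (x + h) - p x) ^ 2 ∂μ) / 2 := by
  have hph := hp.comp_add_right h
  have hsq : ∫ x, p (x + h) ^ 2 ∂μ = ∫ x, p x ^ 2 ∂μ :=
    integral_add_right_eq_self (fun x => p x ^ 2) h
  have hexp : (fun x => (p (x + h) - p x) ^ 2)
      = fun x => p (x + h) ^ 2 + p x ^ 2 - 2 * (p x * p (x + h)) := by
    funext x; ring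
  rw [hexp, integral_sub (f := fun x => p (x + h) ^ 2 + p x ^ 2)
    (hph.integrable_sq.add hp.integrable_sq)
    ((hp.integrable_mul_comp_add_right h).const_mul 2), integral_add hph.integrable_sq
    hp.integrable_sq, integral_const_mul, hsq, autocorr]
  ring

lemma lintegral_ofReal_mul_comp_add_right (hp : MemLp p 2 μ) (hp0 : ∀ x, 0 ≤ p x) (h : G) :
    ∫⁻ x, ENNReal.ofReal (p x) * ENNReal.ofReal (p (x + h)) ∂μ
      = ENNReal.ofReal (autocorr μ p h) := by
  simp_rw [← ENNReal.ofReal_mul (hp0 _)]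
  exact (ofReal_integral_eq_lintegral_ofReal (hp.integrable_mul_comp_add_right h)
    (.of_forall fun x => mul_nonneg (hp0 x) (hp0 (x + h)))).symm

end Translation

section Difference

variable {G : Type*} [AddCommGroup G] [MeasurableSpace G] [MeasurableAdd₂ G] [MeasurableNeg G]
  {μ : Measure G} [SFinite μ] [μ.IsAddLeftInvariant] {g : G → ℝ≥0∞}

lemma withDensity_prod_withDensity_sub_mem (hg : AEMeasurable g μ) {S : Set G}
    (hS : MeasurableSet S) :
    ((μ.withDensity g).prod (μ.withDensity g)) {z | z.2 - z.1 ∈ S}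
      = ∫⁻ h in S, ∫⁻ x, g x * g (x + h) ∂μ ∂μ := by
  have hA : MeasurableSet {z : G × G | z.2 - z.1 ∈ S} := (measurable_snd.sub measurable_fst) hS
  have hshear := measurePreserving_prod_add μ μ
  rw [prod_withDensity₀ hg hg, withDensity_apply _ hA, ← lintegral_indicator hA,
    ← hshear.lintegral_comp_emb (MeasurableEquiv.shearAddRight G).measurableEmbedding,
    ← lintegral_indicator hS, lintegral_prod_symm]
  · refine lintegral_congr fun h => ?_
    by_cases hh : h ∈ S <;> simp [indicator, hh]
  · have hdens : AEMeasurable (fun z : G × G => g z.1 * g z.2) (μ.prod μ) :=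
      (hg.comp_quasiMeasurePreserving Measure.quasiMeasurePreserving_fst).mul
        (hg.comp_quasiMeasurePreserving Measure.quasiMeasurePreserving_snd)
    exact (hdens.indicator hA).comp_quasiMeasurePreserving hshear.quasiMeasurePreserving

end Difference

section Normed

variable {E : Type*} [NormedAddCommGroup E] [MeasurableSpace E] [BorelSpace E]
  {μ : Measure E} {p : E → ℝ}

lemma abs_autocorr_sub_integral_sq_le [μ.IsAddRightInvariant] (hp : MemLp p 2 μ) {α K ε : ℝ}
    (hα : 0 ≤ α) (hε1 : ε ≤ 1)
    (hHolder : ∀ h : E, ‖h‖ ≤ 1 → √(∫ x, (p (x - h) - p x) ^ 2 ∂μ) ≤ K * ‖h‖ ^ α)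
    {h : E} (hh : ‖h‖ ≤ ε) :
    |autocorr μ p h - ∫ x, p x ^ 2 ∂μ| ≤ 1 / 2 * K ^ 2 * ε ^ (2 * α) := by
  have hD0 : 0 ≤ ∫ x, (p (x + h) - p x) ^ 2 ∂μ := integral_nonneg fun x => sq_nonneg _
  have hD : ∫ x, (p (x + h) - p x) ^ 2 ∂μ ≤ K ^ 2 * ε ^ (2 * α) := by
    have hHolder_neg := hHolder (-h) (by simpa using hh.trans hε1)
    simp only [sub_neg_eq_add, norm_neg] at hHolder_neg
    have hpow : ‖h‖ ^ α ≤ ε ^ α := Real.rpow_le_rpow (norm_nonneg h) hh hα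
    calc ∫ x, (p (x + h) - p x) ^ 2 ∂μ
        ≤ (K * ‖h‖ ^ α) ^ 2 := (Real.sqrt_le_iff.mp hHolder_neg).2
      _ = K ^ 2 * (‖h‖ ^ α) ^ 2 := by ring
      _ ≤ K ^ 2 * (ε ^ α) ^ 2 := by gcongr
      _ = K ^ 2 * ε ^ (2 * α) := by
        rw [← Real.rpow_mul_natCast ((norm_nonneg h).trans hh), Nat.cast_ofNat, mul_comm α]
  rw [abs_sub_comm, abs_of_nonneg] <;> linarith [integral_sq_sub_autocorr hp h]

lemma prob_dist_le_eq_setLIntegral_autocorr [SecondCountableTopology E] {Ω : Type*}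
    {mΩ : MeasurableSpace Ω} {P : Measure Ω} [IsFiniteMeasure P] {X X' : Ω → E}
    (hX : Measurable X) (hX' : Measurable X')
    (hindep : IndepFun X X' P) [SFinite μ] [μ.IsAddLeftInvariant]
    (hp : MemLp p 2 μ) (hp0 : ∀ x, 0 ≤ p x)
    (hlawX : P.map X = μ.withDensity fun x => ENNReal.ofReal (p x))
    (hlawX' : P.map X' = μ.withDensity fun x => ENNReal.ofReal (p x)) (ε : ℝ) :
    P {ω | dist (X ω) (X' ω) ≤ ε}
      = ∫⁻ h in closedBall 0 ε, ENNReal.ofReal (autocorr μ p h) ∂μ := by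
  have hset : {z : E × E | dist z.1 z.2 ≤ ε} = {z | z.2 - z.1 ∈ closedBall 0 ε} := by
    ext z
    rw [mem_ofPred_eq, mem_ofPred_eq, mem_closedBall_zero_iff, dist_comm, dist_eq_norm]
  have hA : MeasurableSet {z : E × E | dist z.1 z.2 ≤ ε} :=
    measurableSet_le (continuous_fst.dist continuous_snd).measurable measurable_const
  calc P {ω | dist (X ω) (X' ω) ≤ ε}
      = (P.map fun ω => (X ω, X' ω)) {z | dist z.1 z.2 ≤ ε} :=
        (Measure.map_apply (hX.prodMk hX') hA).symm
    _ = ((μ.withDensity fun x => ENNReal.ofReal (p x)).prod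
          (μ.withDensity fun x => ENNReal.ofReal (p x))) {z | z.2 - z.1 ∈ closedBall 0 ε} := by
        rw [hindep.map_prod_eq_prod_map_map hX.aemeasurable hX'.aemeasurable, hlawX, hlawX', hset]
    _ = ∫⁻ h in closedBall 0 ε, ENNReal.ofReal (autocorr μ p h) ∂μ := by
        rw [withDensity_prod_withDensity_sub_mem hp.1.aemeasurable.ennreal_ofReal
          measurableSet_closedBall]
        exact setLIntegral_congr_fun measurableSet_closedBall
          fun h _ => lintegral_ofReal_mul_comp_add_right hp hp0 h

end Normed

lemma abs_toReal_inv_mul_toReal_setLIntegral_ofReal_sub_le {α : Type*} [MeasurableSpace α]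
    {μ : Measure α} {s : Set α} (hs : MeasurableSet s) (hμs0 : μ s ≠ 0) (hμs : μ s ≠ ∞)
    {f : α → ℝ} {c C : ℝ} (hf0 : ∀ x ∈ s, 0 ≤ f x) (hf : ∀ x ∈ s, |f x - c| ≤ C) :
    |(μ s).toReal⁻¹ * (∫⁻ x in s, ENNReal.ofReal (f x) ∂μ).toReal - c| ≤ C := by
  obtain ⟨x₀, hx₀⟩ := nonempty_of_measure_ne_zero hμs0
  have hcC : 0 ≤ c + C := by linarith [hf0 x₀ hx₀, (abs_le.mp (hf x₀ hx₀)).2]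
  have hb : 0 < (μ s).toReal := ENNReal.toReal_pos hμs0 hμs
  have hupper : ∫⁻ x in s, ENNReal.ofReal (f x) ∂μ ≤ ENNReal.ofReal (c + C) * μ s := by
    rw [← setLIntegral_const]
    exact setLIntegral_mono' hs fun x hx =>
      ENNReal.ofReal_le_ofReal (by linarith [(abs_le.mp (hf x hx)).2])
  have hlower : ENNReal.ofReal (c - C) * μ s ≤ ∫⁻ x in s, ENNReal.ofReal (f x) ∂μ := by
    rw [← setLIntegral_const]
    exact setLIntegral_mono' hs fun x hx =>
      ENNReal.ofReal_le_ofReal (by linarith [(abs_le.mp (hf x hx)).1])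
  have hfin : ∫⁻ x in s, ENNReal.ofReal (f x) ∂μ ≠ ∞ :=
    ne_top_of_le_ne_top (ENNReal.mul_ne_top ENNReal.ofReal_ne_top hμs) hupper
  have h1 := ENNReal.toReal_mono hfin hlower
  have h2 := ENNReal.toReal_mono (ENNReal.mul_ne_top ENNReal.ofReal_ne_top hμs) hupper
  rw [ENNReal.toReal_mul, ENNReal.toReal_ofReal'] at h1
  rw [ENNReal.toReal_mul, ENNReal.toReal_ofReal hcC] at h2
  have h1' : (c - C) * (μ s).toReal ≤ (∫⁻ x in s, ENNReal.ofReal (f x) ∂μ).toReal :=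
    le_trans (by gcongr; exact le_max_left _ _) h1
  rw [abs_sub_le_iff]
  constructor
  · rw [sub_le_iff_le_add, inv_mul_le_iff₀ hb]; linarith
  · rw [sub_le_comm, le_inv_mul_iff₀ hb]; linarith

lemma MeasureTheory.Measure.addHaar_closedBall_eq_addHaar_ball_of_pos {E : Type*}
    [NormedAddCommGroup E] [NormedSpace ℝ E] [MeasurableSpace E] [BorelSpace E]
    [FiniteDimensional ℝ E] (μ : Measure E)
    [μ.IsAddHaarMeasure] (x : E) {r : ℝ} (hr : 0 < r) : μ (closedBall x r) = μ (ball x r) := by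
  rcases subsingleton_or_nontrivial E with hE | hE
  · congr 1; ext y; simp [Subsingleton.elim y x, hr, hr.le]
  · exact Measure.addHaar_closedBall_eq_addHaar_ball μ x r

theorem bias_bound_q20_general (d : ℕ) (α K : ℝ) (hα : 0 < α)
    {Ω : Type*} [MeasureSpace Ω] [IsProbabilityMeasure (ℙ : Measure Ω)]
    (X X' : Ω → EuclideanSpace ℝ (Fin d)) (hX : Measurable X) (hX' : Measurable X')
    (hindep : IndepFun X X' ℙ)
    (pX : EuclideanSpace ℝ (Fin d) → ℝ)
    (hpX0 : ∀ x, 0 ≤ pX x)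
    (hpX2 : MeasureTheory.MemLp pX 2 volume)
    (hlawX : Measure.map X ℙ = volume.withDensity (fun x => ENNReal.ofReal (pX x)))
    (hlawX' : Measure.map X' ℙ = volume.withDensity (fun x => ENNReal.ofReal (pX x)))
    (hHolderX : ∀ h : EuclideanSpace ℝ (Fin d), ‖h‖ ≤ 1 →
      Real.sqrt (∫ x, (pX (x - h) - pX x) ^ 2) ≤ K * ‖h‖ ^ α)
    (ε : ℝ) (hε : 0 < ε) (hε1 : ε ≤ 1) :
    |((volume (Metric.ball (0 : EuclideanSpace ℝ (Fin d)) ε)).toReal)⁻¹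
        * (ℙ {ω | dist (X ω) (X' ω) ≤ ε}).toReal
      - ∫ x, pX x ^ 2| ≤ (1 / 2) * K ^ 2 * ε ^ (2 * α) := by
  rw [prob_dist_le_eq_setLIntegral_autocorr hX hX' hindep hpX2 hpX0 hlawX hlawX' ε,
    ← Measure.addHaar_closedBall_eq_addHaar_ball_of_pos volume 0 hε]
  refine abs_toReal_inv_mul_toReal_setLIntegral_ofReal_sub_le measurableSet_closedBall
    (measure_closedBall_pos volume 0 hε).ne' measure_closedBall_lt_top.ne
    (fun h _ => integral_nonneg fun x => mul_nonneg (hpX0 x) (hpX0 (x + h))) fun h hh => ?_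
  exact abs_autocorr_sub_integral_sq_le hpX2 hα.le hε1 hHolderX (mem_closedBall_zero_iff.mp hh)

/-- For i.i.d. `X, X'` with density `p_X ∈ H₂^(α)(K)`, the approximation
`q̃_{2,0,ε} = b_ε(d)⁻¹ P(|X - X'| ≤ ε)` of `q_{2,0} = ∫ p_X²`
satisfies `|q̃_{2,0,ε} - q_{2,0}| ≤ (1/2) K² ε^(2α)` for `0 < ε ≤ 1`. -/
theorem bias_bound_q20 (d : ℕ) (hd : 1 ≤ d) (α K : ℝ) (hα : 0 < α) (hα1 : α ≤ 1) (hK : 0 < K)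
    {Ω : Type*} [MeasureSpace Ω] [IsProbabilityMeasure (ℙ : Measure Ω)]
    (X X' : Ω → EuclideanSpace ℝ (Fin d)) (hX : Measurable X) (hX' : Measurable X')
    (hindep : IndepFun X X' ℙ)
    (pX : EuclideanSpace ℝ (Fin d) → ℝ)
    (hpX0 : ∀ x, 0 ≤ pX x)
    (hpX2 : MeasureTheory.MemLp pX 2 volume)
    (hlawX : Measure.map X ℙ = volume.withDensity (fun x => ENNReal.ofReal (pX x)))
    (hlawX' : Measure.map X' ℙ = volume.withDensity (fun x => ENNReal.ofReal (pX x)))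
    (hHolderX : ∀ h : EuclideanSpace ℝ (Fin d), ‖h‖ ≤ 1 →
      Real.sqrt (∫ x, (pX (x - h) - pX x) ^ 2) ≤ K * ‖h‖ ^ α)
    (ε : ℝ) (hε : 0 < ε) (hε1 : ε ≤ 1) :
    |((volume (Metric.ball (0 : EuclideanSpace ℝ (Fin d)) ε)).toReal)⁻¹
        * (ℙ {ω | dist (X ω) (X' ω) ≤ ε}).toReal
      - ∫ x, pX x ^ 2| ≤ (1 / 2) * K ^ 2 * ε ^ (2 * α) :=
  bias_bound_q20_general d α K hα X X' hX hX' hindep pX hpX0 hpX2 hlawX hlawX' hHolderX ε hε hε1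
end
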